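/- arXiv:1808.05017 — 5 statements merged into one kernel-verified Lean document; each statement's English description precedes it below -/
import Mathlib

section
/- Let H be a hypergraph, x ∈ V(H), and T ⊆ V(H) with x ∉ T. Then T ∪ {x} is a minimal transversal of H if and only if T is a minimal transversal of H \ H(x) and T is not a transversal of H. -/
variable {α : Type*} [DecidableEq α]

/-- The vertex set `V(H)` of a hypergraph `H`: the union of its hyperedges. -/
def verts (H : Finset (Finset α)) : Finset α := H.sup id

/-- `H(S)`: the set of hyperedges of `H` meeting `S`. -/
def edgesMeeting (H : Finset (Finset α)) (S : Finset α) : Finset (Finset α) :=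
  H.filter fun e => (e ∩ S).Nonempty

/-- `T` is a transversal of `H`: `T ⊆ V(H)` and `T` meets every hyperedge. -/
def IsTransversal (H : Finset (Finset α)) (T : Finset α) : Prop :=
  T ⊆ verts H ∧ ∀ e ∈ H, (T ∩ e).Nonempty

/-- `tr H`: the set of transversals of `H`. -/
def tr (H : Finset (Finset α)) : Finset (Finset α) :=
  (verts H).powerset.filter fun T => ∀ e ∈ H, (T ∩ e).Nonempty

/-- `mtr H`: the set of minimal transversals of `H`. -/
def mtr (H : Finset (Finset α)) : Finset (Finset α) :=
  (tr H).filter fun T => ∀ x ∈ T, T.erase x ∉ tr H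

/-- `T` is a `B`-blocked transversal of `H'`: a transversal of `H'` such that every `x ∈ T`
has a private hyperedge in `H' \ H'(B)`. -/
def IsBlockedTr (B : Finset α) (H' : Finset (Finset α)) (T : Finset α) : Prop :=
  IsTransversal H' T ∧ ∀ x ∈ T, ∃ e ∈ H' \ edgesMeeting H' B, e ∩ T = {x}

/-- `btr_B(H')`: the set of `B`-blocked transversals of `H'`. -/
def btr (B : Finset α) (H' : Finset (Finset α)) : Finset (Finset α) :=
  (tr H').filter fun T => ∀ x ∈ T, ∃ e ∈ H' \ edgesMeeting H' B, e ∩ T = {x}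

/-- `btr_B(H', S)`: the `B`-blocked transversals of `H'` included in `S`. -/
def btrS (B : Finset α) (H' : Finset (Finset α)) (S : Finset α) : Finset (Finset α) :=
  (btr B H').filter fun T => T ⊆ S

/-! `T ∪ {x}` hits every hyperedge of `H` iff `T` hits every hyperedge avoiding `x`, i.e. those
of `H \ H(x)`; the same holds with `T` replaced by `T \ {y}` for `y ∈ T`, so minimality of
`T ∪ {x}` at the vertices of `T` is minimality of `T` in `H \ H(x)`, while minimality at `x` says
exactly that `T` does not hit `H`. The side condition `T ⊆ V(·)` in the definition of a
transversal is automatic for minimal ones: every vertex of a minimal hitting set lies on a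
private hyperedge. -/

def HitsAll (H : Finset (Finset α)) (T : Finset α) : Prop :=
  ∀ e ∈ H, (T ∩ e).Nonempty

section

variable {H : Finset (Finset α)} {S T : Finset α} {x : α}

lemma mem_tr_iff : T ∈ tr H ↔ T ⊆ verts H ∧ HitsAll H T := by
  simp only [tr, HitsAll, Finset.mem_filter, Finset.mem_powerset]

lemma mem_verts_iff {a : α} : a ∈ verts H ↔ ∃ e ∈ H, a ∈ e := by
  simp [verts, Finset.mem_sup]

lemma verts_mono {H₁ H₂ : Finset (Finset α)} (h : H₁ ⊆ H₂) : verts H₁ ⊆ verts H₂ :=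
  Finset.sup_mono h

lemma mem_sdiff_edgesMeeting_singleton {e : Finset α} :
    e ∈ H \ edgesMeeting H {x} ↔ e ∈ H ∧ x ∉ e := by
  by_cases hxe : x ∈ e <;> simp [edgesMeeting, Finset.inter_singleton, hxe]

lemma subset_verts_of_mem_mtr (hT : T ∈ mtr H) : T ⊆ verts H :=
  (mem_tr_iff.1 (Finset.mem_filter.1 hT).1).1

lemma subset_verts_of_hitsAll_of_not_hitsAll_erase (hT : HitsAll H T)
    (hmin : ∀ y ∈ T, ¬HitsAll H (T.erase y)) : T ⊆ verts H := by
  intro y hy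
  obtain ⟨e, he, hmiss⟩ : ∃ e ∈ H, ¬(T.erase y ∩ e).Nonempty := by
    simpa only [HitsAll, not_forall, exists_prop] using hmin y hy
  obtain ⟨z, hz⟩ := hT e he
  obtain ⟨hzT, hze⟩ := Finset.mem_inter.1 hz
  have hzy : z = y := by
    by_contra hne
    exact hmiss ⟨z, Finset.mem_inter.2 ⟨Finset.mem_erase.2 ⟨hne, hzT⟩, hze⟩⟩
  exact mem_verts_iff.2 ⟨e, he, hzy ▸ hze⟩

lemma mem_mtr_iff_hitsAll :
    T ∈ mtr H ↔ HitsAll H T ∧ ∀ y ∈ T, ¬HitsAll H (T.erase y) := by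
  simp only [mtr, Finset.mem_filter, mem_tr_iff]
  constructor
  · rintro ⟨⟨hsub, hT⟩, hmin⟩
    exact ⟨hT, fun y hy h => hmin y hy ⟨(Finset.erase_subset y T).trans hsub, h⟩⟩
  · rintro ⟨hT, hmin⟩
    exact ⟨⟨subset_verts_of_hitsAll_of_not_hitsAll_erase hT hmin, hT⟩,
      fun y hy h => hmin y hy h.2⟩

lemma hitsAll_insert_iff :
    HitsAll H (insert x S) ↔ HitsAll (H \ edgesMeeting H {x}) S := by
  simp only [HitsAll, mem_sdiff_edgesMeeting_singleton, and_imp]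
  refine forall₂_congr fun e he => ?_
  by_cases hxe : x ∈ e <;> simp [hxe]

end

theorem insert_mem_mtr_iff_general (H : Finset (Finset α)) (x : α)
    (T : Finset α) (hxT : x ∉ T) :
    insert x T ∈ mtr H ↔ T ∈ mtr (H \ edgesMeeting H {x}) ∧ T ∉ tr H := by
  have hmin : (∀ y ∈ T, ¬HitsAll H ((insert x T).erase y)) ↔
      ∀ y ∈ T, ¬HitsAll (H \ edgesMeeting H {x}) (T.erase y) :=
    forall₂_congr fun y hy => by
      rw [Finset.erase_insert_of_ne (ne_of_mem_of_not_mem hy hxT).symm, hitsAll_insert_iff]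
  have hverts : T ∈ mtr (H \ edgesMeeting H {x}) → T ⊆ verts H := fun hT =>
    (subset_verts_of_mem_mtr hT).trans (verts_mono Finset.sdiff_subset)
  rw [mem_mtr_iff_hitsAll, Finset.forall_mem_insert, Finset.erase_insert hxT, hmin,
    hitsAll_insert_iff, mem_tr_iff, mem_mtr_iff_hitsAll (H := H \ edgesMeeting H {x})]
  constructor
  · rintro ⟨hT, hnot, hmin'⟩
    exact ⟨⟨hT, hmin'⟩, fun h => hnot h.2⟩
  · rintro ⟨hT', hnot⟩
    exact ⟨hT'.1, fun h => hnot ⟨hverts (mem_mtr_iff_hitsAll.2 hT'), h⟩, hT'.2⟩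

/-- Let `H` be a hypergraph, `x ∈ V(H)` and `T ⊆ V(H)` with `x ∉ T`. Then `T ∪ {x}` is a
minimal transversal of `H` iff `T` is a minimal transversal of `H \ H(x)` and `T` is
not a transversal of `H`. -/
theorem insert_mem_mtr_iff (H : Finset (Finset α)) (x : α) (hx : x ∈ verts H)
    (T : Finset α) (hT : T ⊆ verts H) (hxT : x ∉ T) :
    insert x T ∈ mtr H ↔ T ∈ mtr (H \ edgesMeeting H {x}) ∧ T ∉ tr H :=
  insert_mem_mtr_iff_general H x T hxT
end

section
/- Let H be a hypergraph, S, B ⊆ V(H), and let C_1, …, C_k be the connected components of the induced hypergraph H[S]. For each i ∈ {1, …, k}, let H_i := {e ∈ H | e ∩ S ∈ C_i}. Then btr_B(H, S) = ⊗_{i=1}^k btr_B(H_i, S). -/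
variable {α : Type*} [DecidableEq α]

/-- Two hyperedges are connected by a walk in `H`. -/
def Hconn (H : Finset (Finset α)) (e f : Finset α) : Prop :=
  Relation.ReflTransGen (fun a b => a ∈ H ∧ b ∈ H ∧ (a ∩ b).Nonempty) e f

/-- `C` is a connected component of `H`: a maximal (nonempty) set of hyperedges of `H`
pairwise connected by walks. -/
def IsConnComp (H C : Finset (Finset α)) : Prop :=
  C ⊆ H ∧ C.Nonempty ∧ (∀ e ∈ C, ∀ f ∈ C, Hconn H e f) ∧
    ∀ D : Finset (Finset α), D ⊆ H → C ⊆ D → (∀ e ∈ D, ∀ f ∈ D, Hconn H e f) → D = C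

/-- `H[S]`: the hypergraph induced by `S`. -/
def induce (H : Finset (Finset α)) (S : Finset α) : Finset (Finset α) :=
  H.image fun e => e ∩ S


/-!
The traces on `S` of the hyperedges of one component of `H[S]` all lie in the vertex set of
that component, and distinct components have disjoint vertex sets. So for `T ⊆ S` a hyperedge of
`H_i` only sees `T ∩ V(C_i)`: a blocked transversal of `H` splits into its pieces on the
`V(C_i)`, and conversely a union of blocked transversals of the `H_i` keeps every private
hyperedge private.
-/

open Finset Function

section BlockedTransversal

lemma mem_of_inter_eq_singleton {e T : Finset α} {x : α} (h : e ∩ T = {x}) : x ∈ e :=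
  (mem_inter.1 (h ▸ mem_singleton_self x)).1

lemma mem_sdiff_edgesMeeting {H : Finset (Finset α)} {B e : Finset α} :
    e ∈ H \ edgesMeeting H B ↔ e ∈ H ∧ Disjoint e B := by
  simp only [mem_sdiff, edgesMeeting, mem_filter, ← not_disjoint_iff_nonempty_inter, not_and,
    not_not]
  tauto

lemma mem_btrS_iff {H : Finset (Finset α)} {B S T : Finset α} :
    T ∈ btrS B H S ↔ T ⊆ S ∧ (∀ e ∈ H, (T ∩ e).Nonempty) ∧
      ∀ x ∈ T, ∃ e ∈ H, Disjoint e B ∧ e ∩ T = {x} := by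
  simp only [btrS, btr, tr, mem_filter, mem_powerset, mem_sdiff_edgesMeeting, and_assoc]
  constructor
  · rintro ⟨-, htr, hpriv, hTS⟩
    exact ⟨hTS, htr, hpriv⟩
  · rintro ⟨hTS, htr, hpriv⟩
    refine ⟨fun x hx => ?_, htr, hpriv, hTS⟩
    obtain ⟨e, he, -, hex⟩ := hpriv x hx
    exact mem_sup.2 ⟨e, he, mem_of_inter_eq_singleton hex⟩

lemma subset_of_mem_btrS {H : Finset (Finset α)} {B S V T : Finset α}
    (htrace : ∀ e ∈ H, e ∩ S ⊆ V) (hT : T ∈ btrS B H S) : T ⊆ V := by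
  obtain ⟨hTS, -, hpriv⟩ := mem_btrS_iff.1 hT
  intro x hx
  obtain ⟨e, he, -, hex⟩ := hpriv x hx
  have hxe : x ∈ e := mem_of_inter_eq_singleton hex
  exact htrace e he (mem_inter.2 ⟨hxe, hTS hx⟩)

variable {ι : Type*} {H : Finset (Finset α)} {G : ι → Finset (Finset α)}
  {V : ι → Finset α} {B S : Finset α}

lemma inter_mem_btrS_of_mem_btrS (hG : ∀ i, G i ⊆ H) (hcover : ∀ e ∈ H, ∃ i, e ∈ G i)
    (hV : Pairwise (Disjoint on V)) (htrace : ∀ i, ∀ e ∈ G i, e ∩ S ⊆ V i)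
    {T : Finset α} (hT : T ∈ btrS B H S) (i : ι) : T ∩ V i ∈ btrS B (G i) S := by
  obtain ⟨hTS, htr, hpriv⟩ := mem_btrS_iff.1 hT
  refine mem_btrS_iff.2 ⟨inter_subset_left.trans hTS, fun e he => ?_, fun x hx => ?_⟩
  · obtain ⟨x, hx⟩ := htr e (hG i he)
    obtain ⟨hxT, hxe⟩ := mem_inter.1 hx
    exact ⟨x, mem_inter.2 ⟨mem_inter.2 ⟨hxT, htrace i e he (mem_inter.2 ⟨hxe, hTS hxT⟩)⟩, hxe⟩⟩
  · obtain ⟨hxT, hxV⟩ := mem_inter.1 hx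
    obtain ⟨e, he, heB, hex⟩ := hpriv x hxT
    obtain ⟨j, hej⟩ := hcover e he
    have hxe : x ∈ e := mem_of_inter_eq_singleton hex
    have hji : j = i := by
      by_contra hne
      exact disjoint_left.1 (hV hne) (htrace j e hej (mem_inter.2 ⟨hxe, hTS hxT⟩)) hxV
    subst hji
    exact ⟨e, hej, heB, by rw [← inter_assoc, hex, singleton_inter_of_mem hxV]⟩

lemma eq_sup_inter_of_mem_btrS [Fintype ι] (hcover : ∀ e ∈ H, ∃ i, e ∈ G i)
    (htrace : ∀ i, ∀ e ∈ G i, e ∩ S ⊆ V i) {T : Finset α} (hT : T ∈ btrS B H S) :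
    T = univ.sup fun i => T ∩ V i := by
  obtain ⟨hTS, -, hpriv⟩ := mem_btrS_iff.1 hT
  refine Subset.antisymm (fun x hx => ?_) (Finset.sup_le fun i _ => inter_subset_left)
  obtain ⟨e, he, -, hex⟩ := hpriv x hx
  obtain ⟨i, hei⟩ := hcover e he
  have hxe : x ∈ e := mem_of_inter_eq_singleton hex
  exact mem_sup.2 ⟨i, mem_univ i, mem_inter.2 ⟨hx, htrace i e hei (mem_inter.2 ⟨hxe, hTS hx⟩)⟩⟩

lemma inter_sup_eq_inter_of_subset [Fintype ι] (hV : Pairwise (Disjoint on V)) {f : ι → Finset α}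
    (hfV : ∀ j, f j ⊆ V j) (hfS : ∀ j, f j ⊆ S) {i : ι} {e : Finset α} (he : e ∩ S ⊆ V i) :
    e ∩ univ.sup f = e ∩ f i := by
  refine Subset.antisymm (fun y hy => ?_) (inter_subset_inter_left (le_sup (mem_univ i)))
  obtain ⟨hye, hyf⟩ := mem_inter.1 hy
  obtain ⟨j, -, hyj⟩ := mem_sup.1 hyf
  have hji : j = i := by
    by_contra hne
    exact disjoint_left.1 (hV hne) (hfV j hyj) (he (mem_inter.2 ⟨hye, hfS j hyj⟩))
  subst hji
  exact mem_inter.2 ⟨hye, hyj⟩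

lemma sup_mem_btrS [Fintype ι] (hG : ∀ i, G i ⊆ H) (hcover : ∀ e ∈ H, ∃ i, e ∈ G i)
    (hV : Pairwise (Disjoint on V)) (htrace : ∀ i, ∀ e ∈ G i, e ∩ S ⊆ V i)
    {f : ι → Finset α} (hf : ∀ i, f i ∈ btrS B (G i) S) : univ.sup f ∈ btrS B H S := by
  have hfS : ∀ i, f i ⊆ S := fun i => (mem_btrS_iff.1 (hf i)).1
  have hfV : ∀ i, f i ⊆ V i := fun i => subset_of_mem_btrS (htrace i) (hf i)
  refine mem_btrS_iff.2 ⟨Finset.sup_le fun i _ => hfS i, fun e he => ?_, fun x hx => ?_⟩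
  · obtain ⟨i, hei⟩ := hcover e he
    exact (mem_btrS_iff.1 (hf i)).2.1 e hei |>.mono
      (inter_subset_inter_right (le_sup (f := f) (mem_univ i)))
  · obtain ⟨i, -, hxi⟩ := mem_sup.1 hx
    obtain ⟨e, hei, heB, hex⟩ := (mem_btrS_iff.1 (hf i)).2.2 x hxi
    refine ⟨e, hG i hei, heB, ?_⟩
    rw [inter_sup_eq_inter_of_subset hV hfV hfS (htrace i e hei), hex]

theorem btrS_eq_sup_btrS [Fintype ι] (hG : ∀ i, G i ⊆ H) (hcover : ∀ e ∈ H, ∃ i, e ∈ G i)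
    (hV : Pairwise (Disjoint on V)) (htrace : ∀ i, ∀ e ∈ G i, e ∩ S ⊆ V i) :
    (↑(btrS B H S) : Set (Finset α)) =
      {T | ∃ f : ι → Finset α, (∀ i, f i ∈ btrS B (G i) S) ∧ T = univ.sup f} := by
  ext T
  constructor
  · intro hT
    exact ⟨fun i => T ∩ V i, inter_mem_btrS_of_mem_btrS hG hcover hV htrace hT,
      eq_sup_inter_of_mem_btrS hcover htrace hT⟩
  · rintro ⟨f, hf, rfl⟩
    exact sup_mem_btrS hG hcover hV htrace hf

end BlockedTransversal

section ConnectedComponent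

variable {I C D : Finset (Finset α)} {g h : Finset α}

lemma Hconn.symm (hgh : Hconn I g h) : Hconn I h g := by
  induction hgh with
  | refl => exact Relation.ReflTransGen.refl
  | tail _ hstep ih => exact .head ⟨hstep.2.1, hstep.1, by rw [inter_comm]; exact hstep.2.2⟩ ih

lemma pairwise_hconn_of_hconn (hD : ∀ e ∈ D, Hconn I g e) : ∀ e ∈ D, ∀ f ∈ D, Hconn I e f :=
  fun e he f hf => (hD e he).symm.trans (hD f hf)

lemma IsConnComp.mem_of_inter_nonempty (hC : IsConnComp I C) (hg : g ∈ C) (hh : h ∈ I)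
    (hgh : (g ∩ h).Nonempty) : h ∈ C := by
  obtain ⟨hCI, -, hCconn, hCmax⟩ := hC
  have hconn : ∀ e ∈ insert h C, Hconn I g e := by
    intro e he
    rcases mem_insert.1 he with rfl | he
    · exact .single ⟨hCI hg, hh, hgh⟩
    · exact hCconn g hg e he
  rw [← hCmax _ (insert_subset hh hCI) (subset_insert h C) (pairwise_hconn_of_hconn hconn)]
  exact mem_insert_self h C

lemma IsConnComp.eq_of_mem_of_mem (hC : IsConnComp I C) (hD : IsConnComp I D) (hgC : g ∈ C)
    (hgD : g ∈ D) : C = D := by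
  have hconn : ∀ e ∈ C ∪ D, Hconn I g e := by
    intro e he
    rcases mem_union.1 he with he | he
    · exact hC.2.2.1 g hgC e he
    · exact hD.2.2.1 g hgD e he
  have hCDI : C ∪ D ⊆ I := union_subset hC.1 hD.1
  have hCD := hC.2.2.2 _ hCDI subset_union_left (pairwise_hconn_of_hconn hconn)
  have hDC := hD.2.2.2 _ hCDI subset_union_right (pairwise_hconn_of_hconn hconn)
  exact hCD.symm.trans hDC

lemma IsConnComp.disjoint_verts (hC : IsConnComp I C) (hD : IsConnComp I D) (hCD : C ≠ D) :
    Disjoint (verts C) (verts D) := by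
  refine disjoint_left.2 fun x hxC hxD => hCD ?_
  obtain ⟨g, hg, hxg⟩ := mem_sup.1 hxC
  obtain ⟨h, hh, hxh⟩ := mem_sup.1 hxD
  have hhC : h ∈ C := hC.mem_of_inter_nonempty hg (hD.1 hh) ⟨x, mem_inter.2 ⟨hxg, hxh⟩⟩
  exact hC.eq_of_mem_of_mem hD hhC hh

lemma exists_isConnComp_mem (hg : g ∈ I) : ∃ C, IsConnComp I C ∧ g ∈ C := by
  classical
  have hgC : g ∈ I.filter (Hconn I g) := mem_filter.2 ⟨hg, Relation.ReflTransGen.refl⟩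
  refine ⟨I.filter (Hconn I g), ⟨filter_subset _ _, ⟨g, hgC⟩, ?_, ?_⟩, hgC⟩
  · exact pairwise_hconn_of_hconn fun e he => (mem_filter.1 he).2
  · intro D hDI hCD hDconn
    exact Subset.antisymm (fun e he => mem_filter.2 ⟨hDI he, hDconn g (hCD hgC) e he⟩) hCD

end ConnectedComponent

theorem btrS_eq_otimes_components_general (H : Finset (Finset α)) (S B : Finset α)
    (k : ℕ) (C : Fin k → Finset (Finset α))
    (hcomp : ∀ i, IsConnComp (induce H S) (C i)) (hinj : Function.Injective C)
    (hall : ∀ D, IsConnComp (induce H S) D → ∃ i, C i = D) :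
    (↑(btrS B H S) : Set (Finset α)) =
      {T | ∃ f : Fin k → Finset α,
        (∀ i, f i ∈ btrS B (H.filter fun e => e ∩ S ∈ C i) S) ∧ T = Finset.univ.sup f} := by
  have hcover : ∀ e ∈ H, ∃ i, e ∈ H.filter fun e => e ∩ S ∈ C i := by
    intro e he
    obtain ⟨D, hD, heD⟩ := exists_isConnComp_mem (mem_image_of_mem (· ∩ S) he)
    obtain ⟨i, rfl⟩ := hall D hD
    exact ⟨i, mem_filter.2 ⟨he, heD⟩⟩
  have hdisj : Pairwise (Disjoint on fun i => verts (C i)) :=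
    fun i j hij => (hcomp i).disjoint_verts (hcomp j) (hinj.ne hij)
  have htrace : ∀ i, ∀ e ∈ H.filter (fun e => e ∩ S ∈ C i), e ∩ S ⊆ verts (C i) :=
    fun i e he => le_sup (f := id) (mem_filter.1 he).2
  exact btrS_eq_sup_btrS (fun i => filter_subset _ _) hcover hdisj htrace

/-- **Lemma 4.** Let `C_1, …, C_k` be the connected components of `H[S]` and, for each `i`,
`H_i := {e ∈ H | e ∩ S ∈ C_i}`. Then `btr_B(H, S) = ⊗_{i=1}^k btr_B(H_i, S)`, where the
`k`-fold product `⊗` is empty if one factor is empty, and otherwise consists of all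
unions `T_1 ∪ ⋯ ∪ T_k` with `T_i` in the `i`-th factor. -/
theorem btrS_eq_otimes_components (H : Finset (Finset α)) (S B : Finset α)
    (hS : S ⊆ verts H) (hB : B ⊆ verts H) (k : ℕ) (C : Fin k → Finset (Finset α))
    (hcomp : ∀ i, IsConnComp (induce H S) (C i)) (hinj : Function.Injective C)
    (hall : ∀ D, IsConnComp (induce H S) D → ∃ i, C i = D) :
    (↑(btrS B H S) : Set (Finset α)) =
      {T | ∃ f : Fin k → Finset α,
        (∀ i, f i ∈ btrS B (H.filter fun e => e ∩ S ∈ C i) S) ∧ T = Finset.univ.sup f} :=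
  btrS_eq_otimes_components_general H S B k C hcomp hinj hall
end

section
/- Let H be a hypergraph, S, B ⊆ V(H) and x ∈ S. Then btr_B(H, S)(x) ⊆ {{x}} ⊗ btr_B(H \ H(x), S \ {x}); equivalently, for every B-blocked transversal T of H with T ⊆ S and x ∈ T, the set T \ {x} is a B-blocked transversal of H \ H(x) contained in S \ {x}. -/
variable {α : Type*} [DecidableEq α]

/-- `A₁ ⊗ A₂`: empty if one of them is empty, and otherwise the set of unions `T₁ ∪ T₂`
with `T₁ ∈ A₁` and `T₂ ∈ A₂`. -/
def otimes (A₁ A₂ : Finset (Finset α)) : Finset (Finset α) :=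
  (A₁ ×ˢ A₂).image fun p => p.1 ∪ p.2

/-- **Lemma 5.** `btr_B(H, S)(x) ⊆ {{x}} ⊗ btr_B(H \ H(x), S \ {x})` : if `T` is a
`B`-blocked transversal of `H` with `T ⊆ S` and `x ∈ T`, then `T` is the union of `{x}`
and a `B`-blocked transversal of `H \ H(x)` included in `S \ {x}`. -/
theorem btrS_mem_subset_otimes (H : Finset (Finset α)) (S B : Finset α)
    (hS : S ⊆ verts H) (hB : B ⊆ verts H) (x : α) (hx : x ∈ S) :
    ((btrS B H S).filter fun T => x ∈ T) ⊆
      otimes {({x} : Finset α)} (btrS B (H \ edgesMeeting H {x}) (S \ {x})) := by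
  intro T hT
  simp only [Finset.mem_filter, btrS, btr, tr, Finset.mem_powerset] at hT
  obtain ⟨⟨⟨⟨hTv, hTtr⟩, hpriv⟩, hTS⟩, hxT⟩ := hT
  -- key: private edges of y ≠ x avoid x
  have key : ∀ y ∈ T.erase x, ∃ e, e ∈ H ∧ e ∩ B = ∅ ∧ x ∉ e ∧ e ∩ T = {y} := by
    intro y hy
    rw [Finset.mem_erase] at hy
    obtain ⟨e, he, hpe⟩ := hpriv y hy.2
    rw [Finset.mem_sdiff, edgesMeeting, Finset.mem_filter] at he
    refine ⟨e, he.1, ?_, ?_, hpe⟩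
    · by_contra h
      exact he.2 ⟨he.1, Finset.nonempty_iff_ne_empty.2 h⟩
    · intro hxe
      have : x ∈ e ∩ T := Finset.mem_inter.2 ⟨hxe, hxT⟩
      rw [hpe, Finset.mem_singleton] at this
      exact hy.1 this.symm
  have hxnot : ∀ e ∈ H \ edgesMeeting H {x}, x ∉ e := by
    intro e he hxe
    rw [Finset.mem_sdiff, edgesMeeting, Finset.mem_filter] at he
    exact he.2 ⟨he.1, ⟨x, Finset.mem_inter.2 ⟨hxe, Finset.mem_singleton_self x⟩⟩⟩
  have hmem' : ∀ e ∈ H, x ∉ e → e ∈ H \ edgesMeeting H {x} := by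
    intro e he hxe
    rw [Finset.mem_sdiff, edgesMeeting, Finset.mem_filter]
    refine ⟨he, fun h => ?_⟩
    obtain ⟨z, hz⟩ := h.2
    rw [Finset.mem_inter, Finset.mem_singleton] at hz
    exact hxe (hz.2 ▸ hz.1)
  rw [otimes, Finset.mem_image]
  refine ⟨⟨{x}, T.erase x⟩, ?_, ?_⟩
  · rw [Finset.mem_product]
    refine ⟨Finset.mem_singleton_self _, ?_⟩
    simp only [btrS, btr, tr, Finset.mem_filter, Finset.mem_powerset]
    refine ⟨⟨⟨?_, ?_⟩, ?_⟩, ?_⟩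
    · -- T.erase x ⊆ verts (H \ H({x}))
      intro y hy
      obtain ⟨e, he, _, hxe, hpe⟩ := key y hy
      have : y ∈ e := by
        have : y ∈ e ∩ T := hpe ▸ Finset.mem_singleton_self y
        exact (Finset.mem_inter.1 this).1
      exact Finset.mem_sup.2 ⟨e, hmem' e he hxe, this⟩
    · -- transversal
      intro e he
      obtain ⟨z, hz⟩ := hTtr e ((Finset.mem_sdiff.1 he).1)
      rw [Finset.mem_inter] at hz
      have hzx : z ≠ x := fun h => hxnot e he (h ▸ hz.2)
      exact ⟨z, Finset.mem_inter.2 ⟨Finset.mem_erase.2 ⟨hzx, hz.1⟩, hz.2⟩⟩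
    · -- blocked
      intro y hy
      obtain ⟨e, he, heB, hxe, hpe⟩ := key y hy
      have heH' := hmem' e he hxe
      refine ⟨e, ?_, ?_⟩
      · rw [Finset.mem_sdiff]
        refine ⟨heH', fun h => ?_⟩
        rw [edgesMeeting, Finset.mem_filter] at h
        rw [heB] at h
        exact Finset.not_nonempty_empty h.2
      · rw [Finset.mem_erase] at hy
        ext z
        simp only [Finset.mem_inter, Finset.mem_erase, Finset.mem_singleton]
        constructor
        · rintro ⟨hze, _, hzT⟩
          have : z ∈ e ∩ T := Finset.mem_inter.2 ⟨hze, hzT⟩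
          rw [hpe, Finset.mem_singleton] at this
          exact this
        · rintro rfl
          have : z ∈ e ∩ T := hpe ▸ Finset.mem_singleton_self z
          rw [Finset.mem_inter] at this
          exact ⟨this.1, hy.1, this.2⟩
    · exact fun y hy => Finset.mem_sdiff.2
        ⟨hTS (Finset.mem_erase.1 hy).2, by simp [(Finset.mem_erase.1 hy).1]⟩
  · simp only
    rw [← Finset.insert_eq, Finset.insert_erase hxT]
end

section
/- Let H be a hypergraph, S, B ⊆ V(H) and x ∈ S. Let H_1 := H \ H(x) and H_2 := H \ (H(B) ∩ H(x)). For every T ∈ ({{x}} ⊗ btr_B(H_1, S \ {x})) \ btr_B(H, S)(x), the set T \ {x} belongs to btr_{B ∪ {x}}(H_2, S \ {x}). -/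
variable {α : Type*} [DecidableEq α]

/-- **Claim 1.** With `H₁ := H \ H(x)` and `H₂ := H \ (H(B) ∩ H(x))`, for every
`T ∈ ({{x}} ⊗ btr_B(H₁, S \ {x})) \ btr_B(H, S)(x)`, we have
`T \ {x} ∈ btr_{B ∪ {x}}(H₂, S \ {x})`. -/
theorem sdiff_singleton_mem_btrS (H : Finset (Finset α)) (S B : Finset α)
    (hS : S ⊆ verts H) (hB : B ⊆ verts H) (x : α) (hx : x ∈ S) (T : Finset α)
    (hT : T ∈ otimes {({x} : Finset α)} (btrS B (H \ edgesMeeting H {x}) (S \ {x})) \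
      ((btrS B H S).filter fun T => x ∈ T)) :
    T \ {x} ∈ btrS (B ∪ {x}) (H \ (edgesMeeting H B ∩ edgesMeeting H {x})) (S \ {x}) := by
  rw [Finset.mem_sdiff] at hT
  obtain ⟨hmem, hnot⟩ := hT
  rw [otimes, Finset.mem_image] at hmem
  obtain ⟨⟨T₁, T'⟩, hp, hTeq⟩ := hmem
  rw [Finset.mem_product, Finset.mem_singleton] at hp
  obtain ⟨rfl, hT'⟩ := hp
  subst hTeq
  rw [btrS, Finset.mem_filter, btr, Finset.mem_filter, tr, Finset.mem_filter,
    Finset.mem_powerset] at hT'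
  obtain ⟨⟨⟨hT'sub, hT'cov⟩, hT'blk⟩, hT'S⟩ := hT'
  have hxT' : x ∉ T' := fun h => (Finset.mem_sdiff.mp (hT'S h)).2 (Finset.mem_singleton_self x)
  have hTx : ({x} ∪ T') \ {x} = T' := by
    ext a
    simp only [Finset.mem_sdiff, Finset.mem_union, Finset.mem_singleton]
    constructor
    · rintro ⟨h | h, hne⟩
      · exact absurd h hne
      · exact h
    · intro h
      exact ⟨Or.inr h, fun he => hxT' (he ▸ h)⟩
  rw [hTx]
  -- basic facts about edgesMeeting with {x}
  have hmeetx : ∀ e : Finset α, e ∈ edgesMeeting H {x} ↔ e ∈ H ∧ x ∈ e := by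
    intro e
    simp [edgesMeeting, Finset.inter_singleton_of_mem, Finset.inter_singleton_of_notMem,
      Finset.Nonempty]
  -- private edges of vertices of T' : x ∉ e, e ∩ B = ∅, e ∩ T' = {y}
  have hpriv : ∀ y ∈ T', ∃ e ∈ H, x ∉ e ∧ e ∩ B = ∅ ∧ e ∩ T' = {y} := by
    intro y hy
    obtain ⟨e, he, heT⟩ := hT'blk y hy
    rw [Finset.mem_sdiff, Finset.mem_sdiff] at he
    obtain ⟨⟨heH, hex⟩, heB⟩ := he
    have hxe : x ∉ e := fun h => hex ((hmeetx e).mpr ⟨heH, h⟩)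
    refine ⟨e, heH, hxe, ?_, heT⟩
    rw [← Finset.not_nonempty_iff_eq_empty]
    intro hne
    exact heB (by
      rw [edgesMeeting, Finset.mem_filter]
      exact ⟨Finset.mem_sdiff.mpr ⟨heH, hex⟩, hne⟩)
  -- T = {x} ∪ T' is a transversal of H inside S
  have hTS : {x} ∪ T' ⊆ S := by
    intro a ha
    rcases Finset.mem_union.mp ha with h | h
    · rw [Finset.mem_singleton] at h; exact h ▸ hx
    · exact (Finset.mem_sdiff.mp (hT'S h)).1
  have hTcov : ∀ e ∈ H, (({x} ∪ T') ∩ e).Nonempty := by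
    intro e he
    by_cases hxe : x ∈ e
    · exact ⟨x, Finset.mem_inter.mpr ⟨Finset.mem_union_left _ (Finset.mem_singleton_self x), hxe⟩⟩
    · have heH₁ : e ∈ H \ edgesMeeting H {x} := by
        rw [Finset.mem_sdiff]
        exact ⟨he, fun h => hxe ((hmeetx e).mp h).2⟩
      obtain ⟨a, ha⟩ := hT'cov e heH₁
      rw [Finset.mem_inter] at ha
      exact ⟨a, Finset.mem_inter.mpr ⟨Finset.mem_union_right _ ha.1, ha.2⟩⟩
  -- from hnot: x has no private edge for T wrt B
  have hxnopriv : ∀ e ∈ H, e ∩ B = ∅ → e ∩ ({x} ∪ T') ≠ {x} := by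
    have hTmem : ({x} ∪ T') ∈ tr H ∧ ({x} ∪ T') ⊆ S := by
      refine ⟨?_, hTS⟩
      rw [tr, Finset.mem_filter, Finset.mem_powerset]
      exact ⟨hTS.trans hS, hTcov⟩
    -- extract failing vertex
    have : ¬ ∀ y ∈ ({x} ∪ T'), ∃ e ∈ H \ edgesMeeting H B, e ∩ ({x} ∪ T') = {y} := by
      intro hall
      apply hnot
      rw [Finset.mem_filter, btrS, Finset.mem_filter, btr, Finset.mem_filter]
      exact ⟨⟨⟨hTmem.1, hall⟩, hTmem.2⟩, Finset.mem_union_left _ (Finset.mem_singleton_self x)⟩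
    push_neg at this
    obtain ⟨y, hy, hyfail⟩ := this
    have hyx : y = x := by
      by_contra hne
      have hyT' : y ∈ T' := by
        rcases Finset.mem_union.mp hy with h | h
        · exact absurd (Finset.mem_singleton.mp h) hne
        · exact h
      obtain ⟨e, heH, hxe, heB, heT'⟩ := hpriv y hyT'
      refine hyfail e ?_ ?_
      · rw [Finset.mem_sdiff]
        refine ⟨heH, fun h => ?_⟩
        rw [edgesMeeting, Finset.mem_filter] at h
        rw [heB] at h
        exact Finset.not_nonempty_empty h.2
      · rw [Finset.inter_union_distrib_left, Finset.inter_singleton_of_notMem hxe,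
          Finset.empty_union, heT']
    subst hyx
    intro e heH heB heq
    refine hyfail e ?_ heq
    rw [Finset.mem_sdiff]
    refine ⟨heH, fun h => ?_⟩
    rw [edgesMeeting, Finset.mem_filter, heB] at h
    exact Finset.not_nonempty_empty h.2
  -- now prove the goal
  have hH₁₂ : (H \ edgesMeeting H {x}) ⊆ H \ (edgesMeeting H B ∩ edgesMeeting H {x}) :=
    Finset.sdiff_subset_sdiff (Finset.Subset.refl H) Finset.inter_subset_right
  rw [btrS, Finset.mem_filter, btr, Finset.mem_filter, tr, Finset.mem_filter,
    Finset.mem_powerset]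
  refine ⟨⟨⟨?_, ?_⟩, ?_⟩, hT'S⟩
  · -- T' ⊆ verts H₂
    unfold verts at hT'sub ⊢; exact hT'sub.trans (Finset.sup_mono hH₁₂)
  · -- coverage of H₂
    intro e he
    rw [Finset.mem_sdiff, Finset.mem_inter] at he
    obtain ⟨heH, hem⟩ := he
    by_cases hxe : x ∈ e
    · have heB : e ∩ B = ∅ := by
        rw [← Finset.not_nonempty_iff_eq_empty]
        intro hne
        exact hem ⟨(Finset.mem_filter.mpr ⟨heH, hne⟩ : e ∈ edgesMeeting H B),
          (hmeetx e).mpr ⟨heH, hxe⟩⟩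
      have := hxnopriv e heH heB
      rw [Finset.inter_union_distrib_left, Finset.inter_singleton_of_mem hxe] at this
      rcases Finset.eq_empty_or_nonempty (e ∩ T') with hemp | hne
      · rw [hemp, Finset.union_empty] at this
        exact absurd rfl this
      · obtain ⟨a, ha⟩ := hne
        rw [Finset.mem_inter] at ha
        exact ⟨a, Finset.mem_inter.mpr ⟨ha.2, ha.1⟩⟩
    · have heH₁ : e ∈ H \ edgesMeeting H {x} := by
        rw [Finset.mem_sdiff]
        exact ⟨heH, fun h => hxe ((hmeetx e).mp h).2⟩
      exact hT'cov e heH₁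
  · -- blocking
    intro y hy
    obtain ⟨e, heH, hxe, heB, heT'⟩ := hpriv y hy
    refine ⟨e, ?_, heT'⟩
    have heH₂ : e ∈ H \ (edgesMeeting H B ∩ edgesMeeting H {x}) := by
      rw [Finset.mem_sdiff, Finset.mem_inter]
      exact ⟨heH, fun h => hxe ((hmeetx e).mp h.2).2⟩
    rw [Finset.mem_sdiff]
    refine ⟨heH₂, fun h => ?_⟩
    rw [edgesMeeting, Finset.mem_filter] at h
    rw [Finset.inter_union_distrib_left, heB, Finset.inter_singleton_of_notMem hxe,
      Finset.union_empty] at h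
    exact Finset.not_nonempty_empty h.2
end

section
/- Let H be a hypergraph, S, B ⊆ V(H) and x ∈ S. Let H_1 := H \ H(x) and H_2 := H \ (H(B) ∩ H(x)). For every T ∈ {{x}} ⊗ btr_{B ∪ {x}}(H_2, S \ {x}), we have T ∈ ({{x}} ⊗ btr_B(H_1, S \ {x})) \ btr_B(H, S)(x). -/
variable {α : Type*} [DecidableEq α]

/-- **Claim 2.** With `H₁ := H \ H(x)` and `H₂ := H \ (H(B) ∩ H(x))`, for every
`T ∈ {{x}} ⊗ btr_{B ∪ {x}}(H₂, S \ {x})`, we have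
`T ∈ ({{x}} ⊗ btr_B(H₁, S \ {x})) \ btr_B(H, S)(x)`. -/
theorem mem_otimes_sdiff_btrS (H : Finset (Finset α)) (S B : Finset α)
    (hS : S ⊆ verts H) (hB : B ⊆ verts H) (x : α) (hx : x ∈ S) (T : Finset α)
    (hT : T ∈ otimes {({x} : Finset α)}
      (btrS (B ∪ {x}) (H \ (edgesMeeting H B ∩ edgesMeeting H {x})) (S \ {x}))) :
    T ∈ otimes {({x} : Finset α)} (btrS B (H \ edgesMeeting H {x}) (S \ {x})) \
      ((btrS B H S).filter fun T => x ∈ T) := by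
  classical
  simp only [otimes, Finset.mem_image, Finset.mem_product, Finset.mem_singleton,
    Prod.exists] at hT
  obtain ⟨T1, T', ⟨rfl, hT'⟩, rfl⟩ := hT
  rw [btrS, Finset.mem_filter, btr, Finset.mem_filter, tr, Finset.mem_filter,
    Finset.mem_powerset] at hT'
  obtain ⟨⟨⟨_hsub2, htr2⟩, hpriv2⟩, hTS⟩ := hT'
  have hxT' : x ∉ T' := fun h => (Finset.mem_sdiff.mp (hTS h)).2 (Finset.mem_singleton_self x)
  -- key: private edges for T'
  have key : ∀ y ∈ T', ∃ e, e ∈ H ∧ (e ∩ B) = ∅ ∧ x ∉ e ∧ e ∩ T' = {y} := by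
    intro y hy
    obtain ⟨e, he, hpe⟩ := hpriv2 y hy
    rw [Finset.mem_sdiff] at he
    obtain ⟨he2, henm⟩ := he
    have heH : e ∈ H := (Finset.mem_sdiff.mp he2).1
    rw [edgesMeeting, Finset.mem_filter, not_and] at henm
    have hempty : e ∩ (B ∪ {x}) = ∅ := by
      rw [← Finset.not_nonempty_iff_eq_empty]
      exact henm he2
    rw [Finset.inter_union_distrib_left, Finset.union_eq_empty] at hempty
    refine ⟨e, heH, hempty.1, ?_, hpe⟩
    intro hxe
    have : x ∈ e ∩ {x} := Finset.mem_inter.mpr ⟨hxe, Finset.mem_singleton_self x⟩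
    rw [hempty.2] at this
    exact absurd this (Finset.notMem_empty x)
  -- membership in H₁ for the private edges
  have keyH1 : ∀ y ∈ T', ∃ e, e ∈ H \ edgesMeeting H {x} ∧ (e ∩ B) = ∅ ∧ e ∩ T' = {y} := by
    intro y hy
    obtain ⟨e, heH, heB, hxe, hpe⟩ := key y hy
    refine ⟨e, Finset.mem_sdiff.mpr ⟨heH, ?_⟩, heB, hpe⟩
    rw [edgesMeeting, Finset.mem_filter, not_and]
    intro _
    rw [Finset.not_nonempty_iff_eq_empty, Finset.eq_empty_iff_forall_notMem]
    intro a ha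
    rw [Finset.mem_inter, Finset.mem_singleton] at ha
    exact hxe (ha.2 ▸ ha.1)
  -- H₁ ⊆ H₂
  have hH12 : ∀ e, e ∈ H \ edgesMeeting H {x} →
      e ∈ H \ (edgesMeeting H B ∩ edgesMeeting H {x}) := by
    intro e he
    rw [Finset.mem_sdiff] at he ⊢
    exact ⟨he.1, fun h => he.2 (Finset.mem_inter.mp h).2⟩
  refine Finset.mem_sdiff.mpr ⟨?_, ?_⟩
  · simp only [otimes, Finset.mem_image, Finset.mem_product, Finset.mem_singleton, Prod.exists]
    refine ⟨{x}, T', ⟨rfl, ?_⟩, rfl⟩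
    rw [btrS, Finset.mem_filter, btr, Finset.mem_filter, tr, Finset.mem_filter,
      Finset.mem_powerset]
    refine ⟨⟨⟨?_, fun e he => htr2 e (hH12 e he)⟩, ?_⟩, hTS⟩
    · intro y hy
      obtain ⟨e, he, _, hpe⟩ := keyH1 y hy
      have hye : y ∈ e := by
        have : y ∈ e ∩ T' := hpe ▸ Finset.mem_singleton_self y
        exact (Finset.mem_inter.mp this).1
      exact Finset.mem_sup.mpr ⟨e, he, hye⟩
    · intro y hy
      obtain ⟨e, he, heB, hpe⟩ := keyH1 y hy
      refine ⟨e, Finset.mem_sdiff.mpr ⟨he, ?_⟩, hpe⟩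
      rw [edgesMeeting, Finset.mem_filter, not_and]
      intro _
      rw [Finset.not_nonempty_iff_eq_empty]
      exact heB
  · intro hmem
    rw [Finset.mem_filter, btrS, Finset.mem_filter, btr, Finset.mem_filter] at hmem
    obtain ⟨⟨⟨_, hpriv⟩, _⟩, hxT⟩ := hmem
    obtain ⟨e, he, hpe⟩ := hpriv x hxT
    rw [Finset.mem_sdiff, edgesMeeting, Finset.mem_filter, not_and] at he
    obtain ⟨heH, heB⟩ := he
    have hxe : x ∈ e := by
      have : x ∈ e ∩ ({x} ∪ T') := by rw [hpe]; exact Finset.mem_singleton_self x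
      exact (Finset.mem_inter.mp this).1
    have he2 : e ∈ H \ (edgesMeeting H B ∩ edgesMeeting H {x}) := by
      rw [Finset.mem_sdiff]
      refine ⟨heH, fun h => ?_⟩
      have := (Finset.mem_inter.mp h).1
      rw [edgesMeeting, Finset.mem_filter] at this
      exact heB heH this.2
    obtain ⟨y, hy⟩ := htr2 e he2
    rw [Finset.mem_inter] at hy
    have : y ∈ e ∩ ({x} ∪ T') :=
      Finset.mem_inter.mpr ⟨hy.2, Finset.mem_union_right _ hy.1⟩
    rw [hpe, Finset.mem_singleton] at this
    exact hxT' (this ▸ hy.1)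
end
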